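/- Let A ⊆ B(H₁) and B ⊆ B(H₂) be w*-closed algebras and let M be an essential TRO such that A and B are TRO equivalent via M (that is, A is the w*-closed linear span of M*BM and B is the w*-closed linear span of MAM*). Then the diagonals Δ(A) and Δ(B) are TRO equivalent via the same TRO M. -/

import Mathlib

noncomputable section

open ContinuousLinearMap

universe u v w

section OperatorDefs

variable {H : Type u} {K : Type v} {L : Type w}
variable [NormedAddCommGroup H] [InnerProductSpace ℂ H] [CompleteSpace H]
variable [NormedAddCommGroup K] [InnerProductSpace ℂ K] [CompleteSpace K]
variable [NormedAddCommGroup L] [InnerProductSpace ℂ L] [CompleteSpace L]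

/-- The set of all products (compositions) `a ∘ b` with `a ∈ M`, `b ∈ N`. -/
def mulSet (M : Set (K →L[ℂ] L)) (N : Set (H →L[ℂ] K)) : Set (H →L[ℂ] L) :=
  Set.image2 (fun a b => a.comp b) M N

/-- The set `M* = {T* : T ∈ M}` of adjoints of members of `M`. -/
def adjSet (M : Set (H →L[ℂ] K)) : Set (K →L[ℂ] H) :=
  (fun T => ContinuousLinearMap.adjoint T) '' M

/-- A subset of a complex vector space is a linear subspace. -/
def IsLinSubspace {V : Type*} [AddCommGroup V] [Module ℂ V] (S : Set V) : Prop :=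
  ∃ p : Submodule ℂ V, S = ↑p

/-- The σ-weak (ultraweak, w*) topology on `B(H,K)`: the initial topology induced by the
functionals `T ↦ ∑ₙ ⟪yₙ, T xₙ⟫` for square-summable sequences `(xₙ)`, `(yₙ)`. -/
def sigmaWeak (H : Type u) (K : Type v) [NormedAddCommGroup H] [InnerProductSpace ℂ H]
    [NormedAddCommGroup K] [InnerProductSpace ℂ K] : TopologicalSpace (H →L[ℂ] K) :=
  ⨅ (x : ℕ → H) (y : ℕ → K) (_ : Summable fun n => ‖x n‖ ^ 2)
    (_ : Summable fun n => ‖y n‖ ^ 2),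
    TopologicalSpace.induced (fun T => ∑' n, (inner ℂ (y n) (T (x n)) : ℂ)) inferInstance

/-- `S` is closed in the w* (σ-weak) topology. -/
def IsWStarClosed (S : Set (H →L[ℂ] K)) : Prop := @IsClosed _ (sigmaWeak H K) S

/-- The w*-closed linear span of a set of operators. -/
def wspan (S : Set (H →L[ℂ] K)) : Set (H →L[ℂ] K) :=
  @closure _ (sigmaWeak H K) ((Submodule.span ℂ S : Submodule ℂ (H →L[ℂ] K)) : Set (H →L[ℂ] K))

/-- A ternary ring of operators: a linear subspace `M` with `M M* M ⊆ M`. -/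
def IsTRO (M : Set (H →L[ℂ] K)) : Prop :=
  IsLinSubspace M ∧ mulSet (mulSet M (adjSet M)) M ⊆ M

/-- The orthogonal projection (as an operator on `K`) onto the closed linear span of `S`. -/
def projOntoClosure (S : Set K) : K →L[ℂ] K :=
  haveI : CompleteSpace ((Submodule.span ℂ S).topologicalClosure) :=
    (Submodule.isClosed_topologicalClosure _).completeSpace_coe
  ((Submodule.span ℂ S).topologicalClosure).subtypeL.comp
    (Submodule.orthogonalProjectionOnto ((Submodule.span ℂ S).topologicalClosure))

/-- `Map(U)` : sends a projection `P` on `H` to the projection onto the closed linear span of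
`{T P ξ : T ∈ U, ξ ∈ H}`. -/
def opMap (U : Set (H →L[ℂ] K)) (P : H →L[ℂ] H) : K →L[ℂ] K :=
  projOntoClosure {y : K | ∃ T ∈ U, ∃ ξ : H, T (P ξ) = y}

/-- `U` is essential: `Map(U)(I) = I` and `Map(U*)(I) = I`. -/
def IsEssential (U : Set (H →L[ℂ] K)) : Prop :=
  opMap U 1 = 1 ∧ opMap (adjSet U) 1 = 1

/-- The commutant of a set of operators. -/
def commutantS (S : Set (H →L[ℂ] H)) : Set (H →L[ℂ] H) :=
  {T | ∀ s ∈ S, s * T = T * s}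

/-- An (orthogonal) projection. -/
def IsProjOp (P : H →L[ℂ] H) : Prop := P * P = P ∧ star P = P

/-- The natural order on projections: `P ≤ Q` iff `P Q = P`. -/
def projLE (P Q : H →L[ℂ] H) : Prop := P * Q = P

/-- The invariant projection lattice of an algebra: `Lat(A) = {L : L⊥ A L = 0}`. -/
def LatSet (A : Set (H →L[ℂ] H)) : Set (H →L[ℂ] H) :=
  {P | IsProjOp P ∧ ∀ T ∈ A, (1 - P) * (T * P) = 0}

/-- `Alg(S) = {T : L⊥ T L = 0 for all L ∈ S}`. -/
def AlgSet (S : Set (H →L[ℂ] H)) : Set (H →L[ℂ] H) :=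
  {T | ∀ P ∈ S, (1 - P) * (T * P) = 0}

/-- The reflexive hull of a space of operators. -/
def RefHull (U : Set (H →L[ℂ] K)) : Set (H →L[ℂ] K) :=
  {T | ∀ ξ : H, T ξ ∈
    closure ((Submodule.span ℂ ((fun S : H →L[ℂ] K => S ξ) '' U) : Submodule ℂ K) : Set K)}

/-- The diagonal `Δ(A) = A ∩ A*` of an algebra. -/
def diagSet (A : Set (H →L[ℂ] H)) : Set (H →L[ℂ] H) := A ∩ (star '' A)

/-- A w*-closed (not necessarily unital, not necessarily selfadjoint) operator algebra. -/
def IsWStarClosedAlgebra (A : Set (H →L[ℂ] H)) : Prop :=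
  IsLinSubspace A ∧ (∀ a ∈ A, ∀ b ∈ A, a * b ∈ A) ∧ IsWStarClosed A

/-- `A ∼_M B` : TRO equivalence via the TRO `M`. -/
def TROEquivalentVia (A : Set (H →L[ℂ] H)) (B : Set (K →L[ℂ] K))
    (M : Set (H →L[ℂ] K)) : Prop :=
  IsTRO M ∧ A = wspan (mulSet (mulSet (adjSet M) B) M) ∧
    B = wspan (mulSet (mulSet M A) (adjSet M))

/-- TRO equivalence of two algebras. -/
def TROEquivalent (A : Set (H →L[ℂ] H)) (B : Set (K →L[ℂ] K)) : Prop :=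
  ∃ M : Set (H →L[ℂ] K), TROEquivalentVia A B M

/-- `θ` restricts to a * isomorphism of `C` onto `E`. -/
def IsStarIsomOn (θ : (H →L[ℂ] H) → (K →L[ℂ] K)) (C : Set (H →L[ℂ] H))
    (E : Set (K →L[ℂ] K)) : Prop :=
  Set.BijOn θ C E ∧ (∀ a ∈ C, ∀ b ∈ C, θ (a + b) = θ a + θ b) ∧
    (∀ (c : ℂ), ∀ a ∈ C, θ (c • a) = c • θ a) ∧
    (∀ a ∈ C, ∀ b ∈ C, θ (a * b) = θ a * θ b) ∧
    (∀ a ∈ C, θ (star a) = star (θ a))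

/-- `φ` restricts to a lattice isomorphism (order preserving bijection) of `S₁` onto `S₂`. -/
def IsLatticeIsomOn (φ : (H →L[ℂ] H) → (K →L[ℂ] K)) (S₁ : Set (H →L[ℂ] H))
    (S₂ : Set (K →L[ℂ] K)) : Prop :=
  Set.BijOn φ S₁ S₂ ∧ ∀ P ∈ S₁, ∀ Q ∈ S₁, (projLE P Q ↔ projLE (φ P) (φ Q))

/-- The supremum of a family of projections: projection onto the closed span of the ranges. -/
def latSup (F : Set (H →L[ℂ] H)) : H →L[ℂ] H :=
  projOntoClosure (⋃ P ∈ F, Set.range P)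

/-- The infimum of a family of projections: projection onto the intersection of the ranges. -/
def latInf (F : Set (H →L[ℂ] H)) : H →L[ℂ] H :=
  projOntoClosure (⋂ P ∈ F, Set.range P)

/-- A commutative subspace lattice: commuting projections, `0, 1 ∈ S`, closed under
arbitrary suprema and infima. -/
def IsCSL (S : Set (H →L[ℂ] H)) : Prop :=
  (∀ P ∈ S, IsProjOp P) ∧ (∀ P ∈ S, ∀ Q ∈ S, P * Q = Q * P) ∧
    (0 : H →L[ℂ] H) ∈ S ∧ (1 : H →L[ℂ] H) ∈ S ∧
    ∀ F ⊆ S, latSup F ∈ S ∧ latInf F ∈ S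

/-- `L♭ = ⋁ {M ∈ S : M < L}`. -/
def latFlat (S : Set (H →L[ℂ] H)) (P : H →L[ℂ] H) : H →L[ℂ] H :=
  latSup {M | M ∈ S ∧ projLE M P ∧ M ≠ P}

/-- An atom of the lattice `S` : a (nonzero) difference `L - L♭`. -/
def IsAtomOf (S : Set (H →L[ℂ] H)) (A : H →L[ℂ] H) : Prop :=
  ∃ P ∈ S, latFlat S P ≠ P ∧ A = P - latFlat S P

/-- The sum (supremum) of the atoms of `S`. -/
def atomSum (S : Set (H →L[ℂ] H)) : H →L[ℂ] H :=
  latSup {A | IsAtomOf S A}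

/-- A spatial Morita context `(A, B, U, V)`. -/
def IsSpatialMoritaContext (A : Set (H →L[ℂ] H)) (B : Set (K →L[ℂ] K))
    (U : Set (H →L[ℂ] K)) (V : Set (K →L[ℂ] H)) : Prop :=
  IsLinSubspace U ∧ IsLinSubspace V ∧
    mulSet (mulSet B U) A ⊆ U ∧ mulSet (mulSet A V) B ⊆ V ∧
    A = wspan (mulSet V U) ∧ B = wspan (mulSet U V)

/-- Spatial Morita equivalence. -/
def SpatiallyMoritaEquivalent (A : Set (H →L[ℂ] H)) (B : Set (K →L[ℂ] K)) : Prop :=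
  ∃ (U : Set (H →L[ℂ] K)) (V : Set (K →L[ℂ] H)), IsSpatialMoritaContext A B U V

/-- A maximal abelian selfadjoint algebra: `D = D* = D′`. -/
def IsMasa (D : Set (H →L[ℂ] H)) : Prop :=
  (∀ a ∈ D, star a ∈ D) ∧ commutantS D = D

/-- A reflexive masa bimodule `W` (over the masas `D₂`, `D₁`) is synthetic iff `W_min = W`,
equivalently `W` is contained in every w*-closed `D₂,D₁`-bimodule whose reflexive hull is `W`. -/
def IsSyntheticWrt (D₂ : Set (K →L[ℂ] K)) (D₁ : Set (H →L[ℂ] H))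
    (W : Set (H →L[ℂ] K)) : Prop :=
  ∀ V : Set (H →L[ℂ] K), IsLinSubspace V → IsWStarClosed V →
    mulSet (mulSet D₂ V) D₁ ⊆ V → RefHull V = W → W ⊆ V

/-- The weak operator topology on `B(H,K)`. -/
def wot (H : Type u) (K : Type v) [NormedAddCommGroup H] [InnerProductSpace ℂ H]
    [NormedAddCommGroup K] [InnerProductSpace ℂ K] : TopologicalSpace (H →L[ℂ] K) :=
  ⨅ (x : H) (y : K), TopologicalSpace.induced (fun T => (inner ℂ y (T x) : ℂ)) inferInstance

/-- A von Neumann algebra: a unital selfadjoint subalgebra of `B(H)`, closed in the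
weak operator topology. -/
def IsVonNeumannAlgebra (A : Set (H →L[ℂ] H)) : Prop :=
  IsLinSubspace A ∧ (∀ a ∈ A, ∀ b ∈ A, a * b ∈ A) ∧ (∀ a ∈ A, star a ∈ A) ∧
    (1 : H →L[ℂ] H) ∈ A ∧ @IsClosed _ (wot H H) A

/-- The direct sum `X ⊕ Y` of two operators, acting on the Hilbert space direct sum. -/
def dsum (X : H →L[ℂ] H) (Y : K →L[ℂ] K) :
    WithLp 2 (H × K) →L[ℂ] WithLp 2 (H × K) :=
  (((WithLp.prodContinuousLinearEquiv 2 ℂ H K).symm :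
      (H × K) →L[ℂ] WithLp 2 (H × K)).comp (X.prodMap Y)).comp
    ((WithLp.prodContinuousLinearEquiv 2 ℂ H K) : WithLp 2 (H × K) →L[ℂ] (H × K))

end OperatorDefs

section Aux
set_option linter.unusedSectionVars false
set_option maxHeartbeats 1000000

variable {H : Type u} {K : Type v} [NormedAddCommGroup H] [InnerProductSpace ℂ H] [CompleteSpace H]
  [NormedAddCommGroup K] [InnerProductSpace ℂ K] [CompleteSpace K]

lemma summable_inner_op {ι : Type*} (T : H →L[ℂ] K) {x : ι → H} {y : ι → K}
    (hx : Summable fun n => ‖x n‖ ^ 2) (hy : Summable fun n => ‖y n‖ ^ 2) :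
    Summable fun n => (inner ℂ (y n) (T (x n)) : ℂ) := by
  refine Summable.of_norm (Summable.of_nonneg_of_le (fun n => norm_nonneg _) (fun n => ?_)
    (((hy.add hx).mul_left ‖T‖)))
  calc ‖(inner ℂ (y n) (T (x n)) : ℂ)‖ ≤ ‖y n‖ * ‖T (x n)‖ := norm_inner_le_norm _ _
    _ ≤ ‖y n‖ * (‖T‖ * ‖x n‖) := mul_le_mul_of_nonneg_left (T.le_opNorm _) (norm_nonneg _)
    _ ≤ ‖T‖ * (‖y n‖ ^ 2 + ‖x n‖ ^ 2) := by
        nlinarith [norm_nonneg (y n), norm_nonneg (x n), norm_nonneg T,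
          mul_nonneg (norm_nonneg T) (sq_nonneg (‖y n‖ - ‖x n‖))]

def SWIdx (H : Type u) (K : Type v) [NormedAddCommGroup H] [InnerProductSpace ℂ H]
    [NormedAddCommGroup K] [InnerProductSpace ℂ K] : Type (max u v) :=
  {p : (ℕ → H) × (ℕ → K) // (Summable fun n => ‖p.1 n‖ ^ 2) ∧ (Summable fun n => ‖p.2 n‖ ^ 2)}

noncomputable def swFun (i : SWIdx H K) (T : H →L[ℂ] K) : ℂ :=
  ∑' n, (inner ℂ (i.1.2 n) (T (i.1.1 n)) : ℂ)

lemma swFun_summable (i : SWIdx H K) (T : H →L[ℂ] K) :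
    Summable fun n => (inner ℂ (i.1.2 n) (T (i.1.1 n)) : ℂ) :=
  summable_inner_op T i.2.1 i.2.2

noncomputable def swLin (i : SWIdx H K) : (H →L[ℂ] K) →ₗ[ℂ] ℂ where
  toFun := swFun i
  map_add' T S := by
    simp only [swFun, add_apply, inner_add_right]
    exact Summable.tsum_add (swFun_summable i T) (swFun_summable i S)
  map_smul' c T := by
    simp only [swFun, coe_smul', Pi.smul_apply, inner_smul_right, RingHom.id_apply, smul_eq_mul]
    exact tsum_mul_left

lemma sigmaWeak_eq_iInf :
    sigmaWeak H K = ⨅ i : SWIdx H K, TopologicalSpace.induced (swFun i) inferInstance := by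
  apply le_antisymm
  · refine le_iInf fun i => ?_
    have h := iInf_le (fun x : ℕ → H => ⨅ (y : ℕ → K) (_ : Summable fun n => ‖x n‖ ^ 2)
      (_ : Summable fun n => ‖y n‖ ^ 2),
      TopologicalSpace.induced (fun T : H →L[ℂ] K => ∑' n, (inner ℂ (y n) (T (x n)) : ℂ))
        inferInstance) i.1.1
    refine le_trans h ?_
    have h2 := iInf_le (fun y : ℕ → K => ⨅ (_ : Summable fun n => ‖i.1.1 n‖ ^ 2)
      (_ : Summable fun n => ‖y n‖ ^ 2),
      TopologicalSpace.induced (fun T : H →L[ℂ] K => ∑' n, (inner ℂ (y n) (T (i.1.1 n)) : ℂ))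
        inferInstance) i.1.2
    exact le_trans h2 (le_trans (iInf_le _ i.2.1) (iInf_le _ i.2.2))
  · refine le_iInf fun x => le_iInf fun y => le_iInf fun h1 => le_iInf fun h2 => ?_
    exact iInf_le (fun i : SWIdx H K => TopologicalSpace.induced (swFun i) inferInstance)
      ⟨(x, y), h1, h2⟩

lemma mem_wclosure_of_comb (p : Submodule ℂ (H →L[ℂ] K)) (x : H →L[ℂ] K)
    (hcomb : ∀ (k : ℕ) (idx : Fin k → SWIdx H K) (c : Fin k → ℂ),
      (∀ v ∈ p, ∑ j, c j * swFun (idx j) v = 0) → ∑ j, c j * swFun (idx j) x = 0) :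
    x ∈ @closure _ (sigmaWeak H K) (p : Set (H →L[ℂ] K)) := by
  refine (@mem_closure_iff_nhds _ (sigmaWeak H K) x _).2 ?_
  intro t ht
  rw [sigmaWeak_eq_iInf, nhds_iInf] at ht
  simp only [nhds_induced] at ht
  obtain ⟨I, hIfin, V, hV, rfl⟩ := Filter.mem_iInf.1 ht
  haveI := hIfin.fintype
  set k := Fintype.card I with hk
  set e := Fintype.equivFin I with he
  set idx : Fin k → SWIdx H K := fun j => (e.symm j : SWIdx H K) with hidx
  -- find v ∈ p with swFun (idx j) v = swFun (idx j) x for all j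
  have key : ∃ v ∈ p, ∀ j : Fin k, swFun (idx j) v = swFun (idx j) x := by
    set Φ : (H →L[ℂ] K) →ₗ[ℂ] (Fin k → ℂ) := LinearMap.pi (fun j => swLin (idx j)) with hΦ
    set q : Submodule ℂ (Fin k → ℂ) := p.map Φ with hq
    by_cases hmem : Φ x ∈ q
    · obtain ⟨v, hv, hvx⟩ := hmem
      exact ⟨v, hv, fun j => congrFun hvx j⟩
    · exfalso
      obtain ⟨f, hfx, hfq⟩ := q.exists_dual_map_eq_bot_of_notMem hmem inferInstance
      set c : Fin k → ℂ := fun j => f (fun j' => if j = j' then 1 else 0) with hc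
      have hf_eq : ∀ w : Fin k → ℂ, f w = ∑ j, c j * w j := by
        intro w
        conv_lhs => rw [pi_eq_sum_univ w, map_sum]
        refine Finset.sum_congr rfl fun j _ => ?_
        rw [map_smul]
        simp only [hc, smul_eq_mul]
        ring
      have hvan : ∀ v ∈ p, ∑ j, c j * swFun (idx j) v = 0 := by
        intro v hv
        have : Φ v ∈ q := Submodule.mem_map_of_mem hv
        have hf0 : f (Φ v) = 0 := by
          have : f (Φ v) ∈ q.map f := Submodule.mem_map_of_mem this
          rwa [hfq, Submodule.mem_bot] at this
        rw [hf_eq] at hf0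
        simpa [hΦ, mul_comm, swLin] using hf0
      have := hcomb k idx c hvan
      apply hfx
      rw [hf_eq]
      simpa [hΦ, mul_comm, swLin] using this
  obtain ⟨v, hvp, hvx⟩ := key
  refine ⟨v, ?_, hvp⟩
  rw [Set.mem_iInter]
  intro i
  obtain ⟨U, hU, hUsub⟩ := hV i
  apply hUsub
  have : swFun (i : SWIdx H K) v = swFun (i : SWIdx H K) x := by
    have := hvx (e i)
    simpa [hidx] using this
  simpa [this] using mem_of_mem_nhds hU

section Sets
variable {H : Type u} {K : Type v} {L : Type w} {L' : Type*}
variable [NormedAddCommGroup H] [InnerProductSpace ℂ H] [CompleteSpace H]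
variable [NormedAddCommGroup K] [InnerProductSpace ℂ K] [CompleteSpace K]
variable [NormedAddCommGroup L] [InnerProductSpace ℂ L] [CompleteSpace L]
variable [NormedAddCommGroup L'] [InnerProductSpace ℂ L'] [CompleteSpace L']

lemma mulSet_assoc (P : Set (L →L[ℂ] L')) (Q : Set (K →L[ℂ] L)) (R : Set (H →L[ℂ] K)) :
    mulSet (mulSet P Q) R = mulSet P (mulSet Q R) :=
  Set.image2_assoc fun _ _ _ => rfl

lemma mulSet_mono {P P' : Set (K →L[ℂ] L)} {Q Q' : Set (H →L[ℂ] K)} (h1 : P ⊆ P')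
    (h2 : Q ⊆ Q') : mulSet P Q ⊆ mulSet P' Q' := Set.image2_subset h1 h2

lemma adjSet_adjSet (M : Set (H →L[ℂ] K)) : adjSet (adjSet M) = M := by
  unfold adjSet
  rw [← Set.image_comp]
  have : (fun T : K →L[ℂ] H => ContinuousLinearMap.adjoint T) ∘
      (fun T : H →L[ℂ] K => ContinuousLinearMap.adjoint T) = _root_.id := by
    funext T; exact ContinuousLinearMap.adjoint_adjoint T
  rw [this]; exact Set.image_id M


lemma adjSet_mulSet (P : Set (K →L[ℂ] L)) (Q : Set (H →L[ℂ] K)) :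
    adjSet (mulSet P Q) = mulSet (adjSet Q) (adjSet P) := by
  unfold adjSet mulSet
  rw [Set.image_image2, Set.image2_image_left, Set.image2_image_right, Set.image2_swap]
  simp only [ContinuousLinearMap.adjoint_comp]

lemma adjSet_eq_star (A : Set (H →L[ℂ] H)) : adjSet A = star '' A := by
  unfold adjSet
  refine congrArg (fun f => f '' A) ?_
  funext T
  exact (ContinuousLinearMap.star_eq_adjoint T).symm

lemma adjSet_diagSet (A : Set (H →L[ℂ] H)) : adjSet (diagSet A) = diagSet A := by
  rw [adjSet_eq_star]
  unfold diagSet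
  rw [Set.image_inter star_injective, Set.image_image]
  simp only [star_star, Set.image_id']
  exact Set.inter_comm _ _

lemma adjoint_mem_span_adjSet {S : Set (H →L[ℂ] K)} {T : H →L[ℂ] K}
    (hT : T ∈ Submodule.span ℂ S) :
    ContinuousLinearMap.adjoint T ∈ Submodule.span ℂ (adjSet S) := by
  induction hT using Submodule.span_induction with
  | mem u hu => exact Submodule.subset_span ⟨u, hu, rfl⟩
  | zero => simpa using Submodule.zero_mem _
  | add u v _ _ hu hv => rw [map_add]; exact Submodule.add_mem _ hu hv
  | smul c u _ hu => rw [map_smulₛₗ]; exact Submodule.smul_mem _ _ hu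

lemma wspan_mono {S S' : Set (H →L[ℂ] K)} (h : S ⊆ S') : wspan S ⊆ wspan S' := by
  letI := sigmaWeak H K
  exact closure_mono (SetLike.coe_subset_coe.2 (Submodule.span_mono h))

lemma continuous_swFun (i : SWIdx H K) : @Continuous _ _ (sigmaWeak H K) _ (swFun i) :=
  (continuous_iff_le_induced (f := swFun i) (t₁ := sigmaWeak H K)).2
    (by rw [sigmaWeak_eq_iInf]; exact iInf_le _ i)

def swSwap (i : SWIdx K H) : SWIdx H K := ⟨(i.1.2, i.1.1), i.2.2, i.2.1⟩

lemma swFun_adjoint (i : SWIdx K H) (T : H →L[ℂ] K) :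
    swFun i (ContinuousLinearMap.adjoint T) = star (swFun (swSwap i) T) := by
  rw [swFun, swFun, tsum_star]
  refine tsum_congr fun n => ?_
  rw [ContinuousLinearMap.adjoint_inner_right]
  exact (inner_conj_symm _ _).symm

lemma continuous_adjoint_sw :
    @Continuous _ _ (sigmaWeak H K) (sigmaWeak K H)
      (fun T : H →L[ℂ] K => ContinuousLinearMap.adjoint T) := by
  rw [(sigmaWeak_eq_iInf : sigmaWeak K H = _), continuous_iInf_rng]
  intro i
  rw [continuous_induced_rng]
  have : (swFun i ∘ fun T : H →L[ℂ] K => ContinuousLinearMap.adjoint T)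
      = (fun z : ℂ => star z) ∘ swFun (swSwap i) := funext fun T => swFun_adjoint i T
  rw [this]
  exact @Continuous.comp _ _ _ (sigmaWeak H K) _ _ _ _ continuous_star (continuous_swFun _)

lemma adjoint_mem_wspan_adjSet {S : Set (H →L[ℂ] K)} {T : H →L[ℂ] K} (hT : T ∈ wspan S) :
    ContinuousLinearMap.adjoint T ∈ wspan (adjSet S) := by
  letI : TopologicalSpace (H →L[ℂ] K) := sigmaWeak H K
  letI : TopologicalSpace (K →L[ℂ] H) := sigmaWeak K H
  have h1 : ContinuousLinearMap.adjoint T ∈ (fun T : H →L[ℂ] K => ContinuousLinearMap.adjoint T)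
      '' (closure ((Submodule.span ℂ S : Submodule ℂ _) : Set _)) := ⟨T, hT, rfl⟩
  have h2 := image_closure_subset_closure_image continuous_adjoint_sw h1
  have hsub : (fun T : H →L[ℂ] K => ContinuousLinearMap.adjoint T) ''
      ((Submodule.span ℂ S : Submodule ℂ _) : Set _)
      ⊆ ((Submodule.span ℂ (adjSet S) : Submodule ℂ _) : Set _) := by
    rintro u ⟨v, hv, rfl⟩
    exact adjoint_mem_span_adjSet hv
  exact closure_mono hsub h2
end Sets

section Amp
variable {H : Type u} [NormedAddCommGroup H] [InnerProductSpace ℂ H] [CompleteSpace H]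
variable {ι : Type*}

lemma toReal_two : (2 : ENNReal).toReal = 2 := by norm_num

lemma rpow_toReal_eq_sq (a : ℝ) (ha : 0 ≤ a) : a ^ (2 : ENNReal).toReal = a ^ 2 := by
  rw [toReal_two, show ((2:ℝ)) = ((2:ℕ):ℝ) by norm_num, Real.rpow_natCast]

lemma memℓp_two_of_sq {f : ι → H} (hf : Summable fun i => ‖f i‖ ^ 2) : Memℓp f 2 := by
  apply memℓp_gen
  exact hf.congr fun i => (rpow_toReal_eq_sq _ (norm_nonneg _)).symm

def toLp (f : ι → H) (hf : Summable fun i => ‖f i‖ ^ 2) : lp (fun _ : ι => H) 2 :=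
  ⟨f, memℓp_two_of_sq hf⟩

lemma lp_sq_summable (F : lp (fun _ : ι => H) 2) : Summable fun i => ‖F i‖ ^ 2 :=
  ((lp.memℓp F).summable (by rw [toReal_two]; norm_num)).congr
    fun i => rpow_toReal_eq_sq _ (norm_nonneg _)

lemma lp_norm_sq (F : lp (fun _ : ι => H) 2) : ‖F‖ ^ 2 = ∑' i, ‖F i‖ ^ 2 := by
  have h := lp.norm_rpow_eq_tsum (p := 2) (by rw [toReal_two]; norm_num) F
  rw [rpow_toReal_eq_sq _ (norm_nonneg _)] at h
  rw [h]
  exact tsum_congr fun i => rpow_toReal_eq_sq _ (norm_nonneg _)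

lemma memℓp_amp (s : H →L[ℂ] H) (F : lp (fun _ : ι => H) 2) :
    Memℓp (fun i => s (F i)) 2 := by
  apply memℓp_two_of_sq
  refine Summable.of_nonneg_of_le (fun i => sq_nonneg _) (fun i => ?_)
    ((lp_sq_summable F).mul_left (‖s‖ ^ 2))
  calc ‖s (F i)‖ ^ 2 ≤ (‖s‖ * ‖F i‖) ^ 2 := by
        apply pow_le_pow_left₀ (norm_nonneg _) (s.le_opNorm _)
    _ = ‖s‖ ^ 2 * ‖F i‖ ^ 2 := by ring

noncomputable def ampCLM (s : H →L[ℂ] H) :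
    lp (fun _ : ι => H) 2 →L[ℂ] lp (fun _ : ι => H) 2 :=
  LinearMap.mkContinuous
    { toFun := fun F => (⟨fun i => s (F i), memℓp_amp s F⟩ : lp (fun _ : ι => H) 2)
      map_add' := fun F G => by
        apply lp.ext
        funext i
        simp only [lp.coeFn_add, Pi.add_apply]
        exact map_add s _ _
      map_smul' := fun c F => by
        apply lp.ext
        funext i
        simp only [lp.coeFn_smul, Pi.smul_apply, RingHom.id_apply]
        exact map_smul s c _ }
    ‖s‖
    (by
      intro F
      apply lp.norm_le_of_tsum_le (by rw [toReal_two]; norm_num)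
        (mul_nonneg (norm_nonneg s) (norm_nonneg F))
      have h1 : ∀ i : ι, ‖s (F i)‖ ^ (2 : ENNReal).toReal ≤ ‖s‖ ^ 2 * ‖F i‖ ^ 2 := by
        intro i
        rw [rpow_toReal_eq_sq _ (norm_nonneg _)]
        calc ‖s (F i)‖ ^ 2 ≤ (‖s‖ * ‖F i‖) ^ 2 := by
              apply pow_le_pow_left₀ (norm_nonneg _) (s.le_opNorm _)
          _ = ‖s‖ ^ 2 * ‖F i‖ ^ 2 := by ring
      calc (∑' i, ‖s (F i)‖ ^ (2 : ENNReal).toReal)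
          ≤ ∑' i, ‖s‖ ^ 2 * ‖F i‖ ^ 2 := by
            refine Summable.tsum_le_tsum h1 ?_ ((lp_sq_summable F).mul_left _)
            exact ((memℓp_amp s F).summable (by rw [toReal_two]; norm_num))
        _ = ‖s‖ ^ 2 * ∑' i, ‖F i‖ ^ 2 := tsum_mul_left
        _ = ‖s‖ ^ 2 * ‖F‖ ^ 2 := by rw [lp_norm_sq]
        _ = (‖s‖ * ‖F‖) ^ (2 : ENNReal).toReal := by
            rw [rpow_toReal_eq_sq _ (mul_nonneg (norm_nonneg _) (norm_nonneg _))]; ring)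

lemma ampCLM_apply (s : H →L[ℂ] H) (F : lp (fun _ : ι => H) 2) (i : ι) :
    (ampCLM s F : ∀ _ : ι, H) i = s (F i) := rfl

lemma ampCLM_norm_le (s : H →L[ℂ] H) (F : lp (fun _ : ι => H) 2) :
    ‖ampCLM s F‖ ≤ ‖s‖ * ‖F‖ := by
  have := (ampCLM (ι := ι) s).le_opNorm F
  refine le_trans this (mul_le_mul_of_nonneg_right ?_ (norm_nonneg F))
  exact LinearMap.mkContinuous_norm_le _ (norm_nonneg s) _

lemma ampCLM_comp (s t : H →L[ℂ] H) (F : lp (fun _ : ι => H) 2) :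
    ampCLM s (ampCLM t F) = ampCLM (s.comp t) F := by
  apply lp.ext; funext i; rfl

lemma inner_ampCLM_left (s : H →L[ℂ] H) (F G : lp (fun _ : ι => H) 2) :
    (inner ℂ (ampCLM s F) G : ℂ) = inner ℂ F (ampCLM (ContinuousLinearMap.adjoint s) G) := by
  rw [lp.inner_eq_tsum, lp.inner_eq_tsum]
  refine tsum_congr fun i => ?_
  exact (ContinuousLinearMap.adjoint_inner_right s _ _).symm

end Amp

section Main
variable {H₁ : Type u} {H₂ : Type v}
variable [NormedAddCommGroup H₁] [InnerProductSpace ℂ H₁] [CompleteSpace H₁]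
variable [NormedAddCommGroup H₂] [InnerProductSpace ℂ H₂] [CompleteSpace H₂]

lemma isTRO_adjSet {M : Set (H₁ →L[ℂ] H₂)} (hM : IsTRO M) : IsTRO (adjSet M) := by
  obtain ⟨⟨p, hp⟩, hprod⟩ := hM
  constructor
  · refine ⟨{ carrier := adjSet ↑p
              add_mem' := ?_
              zero_mem' := ?_
              smul_mem' := ?_ }, by rw [hp]; rfl⟩
    · rintro _ _ ⟨u, hu, rfl⟩ ⟨v, hv, rfl⟩
      exact ⟨u + v, add_mem hu hv, by simp⟩
    · exact ⟨0, zero_mem p, by simp⟩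
    · rintro c _ ⟨u, hu, rfl⟩
      refine ⟨(starRingEnd ℂ) c • u, Submodule.smul_mem p _ hu, ?_⟩
      show ContinuousLinearMap.adjoint ((starRingEnd ℂ) c • u) = c • ContinuousLinearMap.adjoint u
      rw [map_smulₛₗ]
      simp
  · rintro T hT
    rw [adjSet_adjSet] at hT
    obtain ⟨u, hu, w, hw, rfl⟩ := hT
    obtain ⟨a, ha, n, hn, rfl⟩ := hu
    obtain ⟨m, hm, rfl⟩ := ha
    obtain ⟨q, hq, rfl⟩ := hw
    refine ⟨(q.comp (ContinuousLinearMap.adjoint n)).comp m, ?_, ?_⟩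
    · exact hprod ⟨q.comp (ContinuousLinearMap.adjoint n),
        ⟨q, hq, ContinuousLinearMap.adjoint n, ⟨n, hn, rfl⟩, rfl⟩, m, hm, rfl⟩
    · simp only [ContinuousLinearMap.adjoint_comp, ContinuousLinearMap.adjoint_adjoint]
      rw [ContinuousLinearMap.comp_assoc]

lemma projOnto_eq_one_dense {S : Set H₁} (h : projOntoClosure S = 1) (v : H₁)
    (hv : ∀ u ∈ S, (inner ℂ u v : ℂ) = 0) : v = 0 := by
  have hvmem : v ∈ (Submodule.span ℂ S).topologicalClosure := by
    have h2 := congrArg (fun f : H₁ →L[ℂ] H₁ => f v) h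
    simp only [projOntoClosure, ContinuousLinearMap.coe_comp', Function.comp_apply,
      Submodule.subtypeL_apply, ContinuousLinearMap.one_apply] at h2
    rw [← h2]
    exact Submodule.coe_mem _
  have hclosed : IsClosed {w : H₁ | (inner ℂ w v : ℂ) = 0} :=
    isClosed_eq (Continuous.inner continuous_id continuous_const) continuous_const
  have hspan : ((Submodule.span ℂ S : Submodule ℂ H₁) : Set H₁) ⊆ {w | (inner ℂ w v : ℂ) = 0} := by
    intro w hw
    induction hw using Submodule.span_induction with
    | mem u hu => exact hv u hu
    | zero => simp
    | add a b _ _ ha hb => simp only [Set.mem_setOf_eq] at ha hb ⊢; rw [inner_add_left, ha, hb, add_zero]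
    | smul c a _ ha => simp only [Set.mem_setOf_eq] at ha ⊢; rw [inner_smul_left, ha, mul_zero]
  have hmem2 : v ∈ closure ((Submodule.span ℂ S : Submodule ℂ H₁) : Set H₁) := hvmem
  have : (inner ℂ v v : ℂ) = 0 := closure_minimal hspan hclosed hmem2
  exact inner_self_eq_zero.1 this

lemma essential_vanish₂ {M : Set (H₁ →L[ℂ] H₂)} (hMe : opMap M 1 = 1) (v : H₂)
    (hv : ∀ T ∈ M, ∀ ξ : H₁, (inner ℂ (T ξ) v : ℂ) = 0) : v = 0 := by
  refine projOnto_eq_one_dense hMe v ?_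
  rintro u ⟨T, hT, ξ, rfl⟩
  simpa using hv T hT ξ

lemma subset_wspan (S : Set (H₁ →L[ℂ] H₂)) : S ⊆ wspan S := by
  intro u hu
  letI := sigmaWeak H₁ H₂
  have h1 : u ∈ ((Submodule.span ℂ S : Submodule ℂ _) : Set _) := Submodule.subset_span hu
  exact subset_closure h1

lemma N0_mul_mem {M : Set (H₁ →L[ℂ] H₂)} (hM : IsTRO M) {s t : H₁ →L[ℂ] H₁}
    (hs : s ∈ Submodule.span ℂ (mulSet (adjSet M) M))
    (ht : t ∈ Submodule.span ℂ (mulSet (adjSet M) M)) :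
    s.comp t ∈ Submodule.span ℂ (mulSet (adjSet M) M) := by
  induction hs using Submodule.span_induction with
  | mem u hu =>
    induction ht using Submodule.span_induction with
    | mem v hv =>
      obtain ⟨a, ⟨m, hm, rfl⟩, n, hn, rfl⟩ := hu
      obtain ⟨b, ⟨p, hp, rfl⟩, q, hq, rfl⟩ := hv
      refine Submodule.subset_span ⟨ContinuousLinearMap.adjoint m, ⟨m, hm, rfl⟩,
        (n.comp (ContinuousLinearMap.adjoint p)).comp q,
        hM.2 ⟨n.comp (ContinuousLinearMap.adjoint p),
          ⟨n, hn, ContinuousLinearMap.adjoint p, ⟨p, hp, rfl⟩, rfl⟩, q, hq, rfl⟩, ?_⟩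
      simp only [ContinuousLinearMap.comp_assoc]
    | zero => rw [ContinuousLinearMap.comp_zero]; exact Submodule.zero_mem _
    | add a b _ _ iha ihb => rw [ContinuousLinearMap.comp_add]; exact Submodule.add_mem _ iha ihb
    | smul c a _ iha =>
      have h1 : u.comp (c • a) = c • u.comp a := by ext ξ; simp
      rw [h1]; exact Submodule.smul_mem _ _ iha
  | zero => rw [ContinuousLinearMap.zero_comp]; exact Submodule.zero_mem _
  | add a b _ _ iha ihb => rw [ContinuousLinearMap.add_comp]; exact Submodule.add_mem _ iha ihb
  | smul c a _ iha => rw [ContinuousLinearMap.smul_comp]; exact Submodule.smul_mem _ _ iha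

lemma N0_star_mem {M : Set (H₁ →L[ℂ] H₂)} {s : H₁ →L[ℂ] H₁}
    (hs : s ∈ Submodule.span ℂ (mulSet (adjSet M) M)) :
    ContinuousLinearMap.adjoint s ∈ Submodule.span ℂ (mulSet (adjSet M) M) := by
  induction hs using Submodule.span_induction with
  | mem u hu =>
    obtain ⟨a, ⟨m, hm, rfl⟩, n, hn, rfl⟩ := hu
    refine Submodule.subset_span ⟨ContinuousLinearMap.adjoint n, ⟨n, hn, rfl⟩, m, hm, ?_⟩
    rw [ContinuousLinearMap.adjoint_comp, ContinuousLinearMap.adjoint_adjoint]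
  | zero => simp only [map_zero]; exact Submodule.zero_mem _
  | add a b _ _ iha ihb => rw [map_add]; exact Submodule.add_mem _ iha ihb
  | smul c a _ iha => rw [map_smulₛₗ]; exact Submodule.smul_mem _ _ iha

lemma sxt_mem {A : Set (H₁ →L[ℂ] H₁)} {B : Set (H₂ →L[ℂ] H₂)} {M : Set (H₁ →L[ℂ] H₂)}
    (h₂ : B = wspan (mulSet (mulSet M A) (adjSet M))) {x : H₁ →L[ℂ] H₁}
    (hx : x ∈ A) (hxs : ContinuousLinearMap.adjoint x ∈ A) {s t : H₁ →L[ℂ] H₁}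
    (hs : s ∈ Submodule.span ℂ (mulSet (adjSet M) M))
    (ht : t ∈ Submodule.span ℂ (mulSet (adjSet M) M)) :
    s.comp (x.comp t) ∈ Submodule.span ℂ (mulSet (mulSet (adjSet M) (diagSet B)) M) := by
  induction hs using Submodule.span_induction with
  | mem u hu =>
    induction ht using Submodule.span_induction with
    | mem v hv =>
      obtain ⟨a, ⟨m, hm, rfl⟩, n, hn, rfl⟩ := hu
      obtain ⟨b, ⟨p, hp, rfl⟩, q, hq, rfl⟩ := hv
      set d : H₂ →L[ℂ] H₂ := (n.comp x).comp (ContinuousLinearMap.adjoint p) with hd_def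
      have hdB : d ∈ B := by
        rw [h₂]
        exact subset_wspan _ ⟨n.comp x, ⟨n, hn, x, hx, rfl⟩,
          ContinuousLinearMap.adjoint p, ⟨p, hp, rfl⟩, rfl⟩
      have hdstarB : ContinuousLinearMap.adjoint d ∈ B := by
        rw [h₂]
        refine subset_wspan _ ⟨p.comp (ContinuousLinearMap.adjoint x),
          ⟨p, hp, ContinuousLinearMap.adjoint x, hxs, rfl⟩,
          ContinuousLinearMap.adjoint n, ⟨n, hn, rfl⟩, ?_⟩
        rw [hd_def]
        simp only [ContinuousLinearMap.adjoint_comp, ContinuousLinearMap.adjoint_adjoint,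
          ContinuousLinearMap.comp_assoc]
      have hdiag : d ∈ diagSet B := by
        refine ⟨hdB, ContinuousLinearMap.adjoint d, hdstarB, ?_⟩
        rw [ContinuousLinearMap.star_eq_adjoint, ContinuousLinearMap.adjoint_adjoint]
      refine Submodule.subset_span ⟨(ContinuousLinearMap.adjoint m).comp d,
        ⟨ContinuousLinearMap.adjoint m, ⟨m, hm, rfl⟩, d, hdiag, rfl⟩, q, hq, ?_⟩
      rw [hd_def]
      simp only [ContinuousLinearMap.comp_assoc]
    | zero =>
      rw [ContinuousLinearMap.comp_zero, ContinuousLinearMap.comp_zero]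
      exact Submodule.zero_mem _
    | add a b _ _ iha ihb =>
      rw [ContinuousLinearMap.comp_add, ContinuousLinearMap.comp_add]
      exact Submodule.add_mem _ iha ihb
    | smul c a _ iha =>
      have h1 : x.comp (c • a) = c • x.comp a := by ext ξ; simp
      have h2 : u.comp (c • x.comp a) = c • u.comp (x.comp a) := by ext ξ; simp
      rw [h1, h2]; exact Submodule.smul_mem _ _ iha
  | zero => rw [ContinuousLinearMap.zero_comp]; exact Submodule.zero_mem _
  | add a b _ _ iha ihb => rw [ContinuousLinearMap.add_comp]; exact Submodule.add_mem _ iha ihb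
  | smul c a _ iha => rw [ContinuousLinearMap.smul_comp]; exact Submodule.smul_mem _ _ iha

lemma approx_identity {M : Set (H₁ →L[ℂ] H₂)} (hM : IsTRO M) (hMe : IsEssential M)
    {ι : Type*} (W : lp (fun _ : ι => H₁) 2) {ε : ℝ} (hε : 0 < ε) :
    ∃ s ∈ Submodule.span ℂ (mulSet (adjSet M) M), ‖W - ampCLM s W‖ < ε := by
  set N₀ := Submodule.span ℂ (mulSet (adjSet M) M) with hN₀
  set LX : (H₁ →L[ℂ] H₁) →ₗ[ℂ] lp (fun _ : ι => H₁) 2 :=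
    { toFun := fun s => ampCLM s W
      map_add' := fun s t => by
        apply lp.ext; funext i
        simp only [lp.coeFn_add, Pi.add_apply]
        exact ContinuousLinearMap.add_apply s t (W i)
      map_smul' := fun c s => by
        apply lp.ext; funext i
        simp only [lp.coeFn_smul, Pi.smul_apply, RingHom.id_apply]
        rfl } with hLX
  set Ksub := (Submodule.map LX N₀).topologicalClosure with hKsub
  haveI : CompleteSpace Ksub := (Submodule.isClosed_topologicalClosure _).completeSpace_coe
  set Z := W - (Ksub.orthogonalProjectionOnto W : lp (fun _ : ι => H₁) 2) with hZ
  have hZo : Z ∈ Ksubᗮ := Submodule.sub_starProjection_mem_orthogonal W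
  have hmapsTo : ∀ s ∈ N₀, ∀ u, u ∈ Ksub → ampCLM s u ∈ Ksub := by
    intro s hs u hu
    have himg : ampCLM s u ∈ (ampCLM s) ''
        (closure ((Submodule.map LX N₀ : Submodule ℂ (lp (fun _ : ι => H₁) 2)) : Set (lp (fun _ : ι => H₁) 2))) := ⟨u, hu, rfl⟩
    have h2 := image_closure_subset_closure_image (ampCLM s).continuous himg
    have hsub : (ampCLM s) '' ((Submodule.map LX N₀ : Submodule ℂ (lp (fun _ : ι => H₁) 2)) : Set (lp (fun _ : ι => H₁) 2))
        ⊆ ((Submodule.map LX N₀ : Submodule ℂ (lp (fun _ : ι => H₁) 2)) : Set (lp (fun _ : ι => H₁) 2)) := by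
      rintro _ ⟨v, ⟨t, ht, rfl⟩, rfl⟩
      exact ⟨s.comp t, N0_mul_mem hM hs ht, (ampCLM_comp s t W).symm⟩
    exact closure_mono hsub h2
  have hcoordzero : ∀ s ∈ N₀, ampCLM s Z = 0 := by
    intro s hs
    have h1 : ampCLM s Z ∈ Ksub := by
      have hsp : ampCLM s Z = ampCLM s W - ampCLM s (Ksub.orthogonalProjectionOnto W) :=
        map_sub (ampCLM s) W _
      rw [hsp]
      refine Submodule.sub_mem _ ?_ (hmapsTo s hs _ (Submodule.coe_mem (Ksub.orthogonalProjectionOnto W)))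
      exact Submodule.le_topologicalClosure _ (Submodule.mem_map_of_mem hs)
    have h2 : ampCLM s Z ∈ Ksubᗮ := by
      rw [Submodule.mem_orthogonal]
      intro u hu
      have he : (inner ℂ u (ampCLM s Z) : ℂ)
          = inner ℂ (ampCLM (ContinuousLinearMap.adjoint s) u) Z := by
        rw [inner_ampCLM_left, ContinuousLinearMap.adjoint_adjoint]
      rw [he]
      exact (Submodule.mem_orthogonal _ _).1 hZo _ (hmapsTo _ (N0_star_mem hs) u hu)
    exact Submodule.disjoint_def.1 Ksub.orthogonal_disjoint _ h1 h2
  have hZzero : Z = 0 := by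
    apply lp.ext; funext i
    simp only [lp.coeFn_zero, Pi.zero_apply]
    have h3 : ∀ n ∈ M, n (Z i) = 0 := by
      intro n hn
      refine essential_vanish₂ hMe.1 _ ?_
      intro T hT ξ
      have hgen : (ContinuousLinearMap.adjoint T).comp n ∈ N₀ :=
        Submodule.subset_span ⟨_, ⟨T, hT, rfl⟩, n, hn, rfl⟩
      have h4 := hcoordzero _ hgen
      have h5 : (ContinuousLinearMap.adjoint T) (n (Z i)) = 0 := by
        have h6 := congrArg (fun F : lp (fun _ : ι => H₁) 2 => F i) h4
        simp at h6
        exact h6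
      calc (inner ℂ (T ξ) (n (Z i)) : ℂ)
          = inner ℂ ξ ((ContinuousLinearMap.adjoint T) (n (Z i))) :=
            (ContinuousLinearMap.adjoint_inner_right T _ _).symm
        _ = 0 := by rw [h5, inner_zero_right]
    refine essential_vanish₂ (M := adjSet M) hMe.2 _ ?_
    rintro T ⟨m, hm, rfl⟩ η
    rw [ContinuousLinearMap.adjoint_inner_left, h3 m hm, inner_zero_right]
  have hWK : W ∈ Ksub := by
    have h7 : W = (Ksub.orthogonalProjectionOnto W : lp (fun _ : ι => H₁) 2) := by
      have := hZzero
      rw [hZ, sub_eq_zero] at this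
      exact this
    rw [h7]; exact Submodule.coe_mem _
  have hWcl : W ∈ closure ((Submodule.map LX N₀ : Submodule ℂ (lp (fun _ : ι => H₁) 2)) : Set (lp (fun _ : ι => H₁) 2)) := hWK
  rw [Metric.mem_closure_iff] at hWcl
  obtain ⟨u, hu, hdist⟩ := hWcl ε hε
  obtain ⟨s, hs, rfl⟩ := hu
  refine ⟨s, hs, ?_⟩
  rw [← dist_eq_norm]
  exact hdist

lemma hard_direction (A : Set (H₁ →L[ℂ] H₁)) (B : Set (H₂ →L[ℂ] H₂)) (M : Set (H₁ →L[ℂ] H₂))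
    (hM : IsTRO M) (hMe : IsEssential M)
    (h₁ : A = wspan (mulSet (mulSet (adjSet M) B) M))
    (h₂ : B = wspan (mulSet (mulSet M A) (adjSet M))) :
    diagSet A ⊆ wspan (mulSet (mulSet (adjSet M) (diagSet B)) M) := by
  intro x hxd
  obtain ⟨hxA, a, haA, hax⟩ := hxd
  have hxsA : ContinuousLinearMap.adjoint x ∈ A := by
    rw [← ContinuousLinearMap.star_eq_adjoint, ← hax, star_star]
    exact haA
  unfold wspan
  apply mem_wclosure_of_comb
  intro k idx c hvan
  set X : Fin k × ℕ → H₁ := fun g => (idx g.1).1.1 g.2 with hX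
  set Y : Fin k × ℕ → H₁ := fun g => (starRingEnd ℂ) (c g.1) • (idx g.1).1.2 g.2 with hY
  have hXs : Summable fun g : Fin k × ℕ => ‖X g‖ ^ 2 := by
    refine (summable_prod_of_nonneg fun g => sq_nonneg _).2 ⟨fun j => (idx j).2.1, ?_⟩
    exact Summable.of_finite
  have hYs : Summable fun g : Fin k × ℕ => ‖Y g‖ ^ 2 := by
    refine (summable_prod_of_nonneg fun g => sq_nonneg _).2 ⟨fun j => ?_, Summable.of_finite⟩
    have hYj : ∀ n : ℕ, ‖Y (j, n)‖ ^ 2 = ‖c j‖ ^ 2 * ‖(idx j).1.2 n‖ ^ 2 := by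
      intro n
      rw [hY]
      rw [norm_smul, mul_pow]
      congr 2
      exact RCLike.norm_conj _
    exact Summable.congr (((idx j).2.2).mul_left (‖c j‖ ^ 2)) fun n => (hYj n).symm
  set Xl : lp (fun _ : Fin k × ℕ => H₁) 2 := toLp X hXs with hXl
  set Yl : lp (fun _ : Fin k × ℕ => H₁) 2 := toLp Y hYs with hYl
  have hsummG : ∀ T : H₁ →L[ℂ] H₁,
      Summable fun g : Fin k × ℕ => (inner ℂ (Y g) (T (X g)) : ℂ) :=
    fun T => summable_inner_op T hXs hYs
  have hω : ∀ T : H₁ →L[ℂ] H₁,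
      (inner ℂ Yl (ampCLM T Xl) : ℂ) = ∑ j, c j * swFun (idx j) T := by
    intro T
    have e1 : (inner ℂ Yl (ampCLM T Xl) : ℂ)
        = ∑' g : Fin k × ℕ, (inner ℂ (Y g) (T (X g)) : ℂ) := by
      rw [lp.inner_eq_tsum]
      exact tsum_congr fun g => rfl
    rw [e1, Summable.tsum_prod (hsummG T), tsum_fintype]
    refine Finset.sum_congr rfl fun j _ => ?_
    rw [swFun, ← tsum_mul_left]
    refine tsum_congr fun n => ?_
    rw [hY]
    rw [inner_smul_left]
    simp
    exact Or.inl rfl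
  have hvanω : ∀ v ∈ Submodule.span ℂ (mulSet (mulSet (adjSet M) (diagSet B)) M),
      (inner ℂ Yl (ampCLM v Xl) : ℂ) = 0 := fun v hv => by rw [hω v]; exact hvan v hv
  rw [← hω x]
  have hkey : ∀ ε : ℝ, 0 < ε → ‖(inner ℂ Yl (ampCLM x Xl) : ℂ)‖ ≤ 0 + ε := by
    intro ε hε
    set C := ‖Yl‖ * ‖x‖ + ‖x‖ * (‖Xl‖ + 1) with hC
    have hC0 : 0 ≤ C := by positivity
    set δ := min 1 (ε / (C + 1)) with hδ
    have hδ0 : 0 < δ := lt_min one_pos (div_pos hε (by linarith))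
    have hδ1 : δ ≤ 1 := min_le_left _ _
    obtain ⟨s, hs, hsX⟩ := approx_identity hM hMe Xl hδ0
    obtain ⟨t, ht, htY⟩ := approx_identity hM hMe Yl hδ0
    have hu_norm : ‖ampCLM s Xl‖ ≤ ‖Xl‖ + 1 := by
      have h8 : ‖ampCLM s Xl‖ ≤ ‖Xl‖ + ‖Xl - ampCLM s Xl‖ := by
        calc ‖ampCLM s Xl‖ = ‖Xl - (Xl - ampCLM s Xl)‖ := by rw [sub_sub_cancel]
          _ ≤ ‖Xl‖ + ‖Xl - ampCLM s Xl‖ := norm_sub_le _ _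
      linarith
    have hzero : (inner ℂ (ampCLM t Yl) (ampCLM x (ampCLM s Xl)) : ℂ) = 0 := by
      rw [ampCLM_comp, inner_ampCLM_left, ampCLM_comp]
      exact hvanω _ (sxt_mem h₂ hxA hxsA (N0_star_mem ht) hs)
    have hsplit : (inner ℂ Yl (ampCLM x Xl) : ℂ)
        = inner ℂ Yl (ampCLM x Xl - ampCLM x (ampCLM s Xl))
          + inner ℂ (Yl - ampCLM t Yl) (ampCLM x (ampCLM s Xl))
          + (inner ℂ (ampCLM t Yl) (ampCLM x (ampCLM s Xl)) : ℂ) := by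
      simp only [inner_sub_left, inner_sub_right]
      ring
    have hb1 : ‖(inner ℂ Yl (ampCLM x Xl - ampCLM x (ampCLM s Xl)) : ℂ)‖
        ≤ ‖Yl‖ * (‖x‖ * δ) := by
      have h9 : ampCLM x Xl - ampCLM x (ampCLM s Xl) = ampCLM x (Xl - ampCLM s Xl) :=
        (map_sub (ampCLM x) _ _).symm
      rw [h9]
      calc ‖(inner ℂ Yl (ampCLM x (Xl - ampCLM s Xl)) : ℂ)‖
          ≤ ‖Yl‖ * ‖ampCLM x (Xl - ampCLM s Xl)‖ := norm_inner_le_norm _ _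
        _ ≤ ‖Yl‖ * (‖x‖ * δ) := by
            refine mul_le_mul_of_nonneg_left ?_ (norm_nonneg _)
            refine le_trans (ampCLM_norm_le x _) ?_
            exact mul_le_mul_of_nonneg_left (le_of_lt hsX) (norm_nonneg _)
    have hb2 : ‖(inner ℂ (Yl - ampCLM t Yl) (ampCLM x (ampCLM s Xl)) : ℂ)‖
        ≤ δ * (‖x‖ * (‖Xl‖ + 1)) := by
      calc ‖(inner ℂ (Yl - ampCLM t Yl) (ampCLM x (ampCLM s Xl)) : ℂ)‖
          ≤ ‖Yl - ampCLM t Yl‖ * ‖ampCLM x (ampCLM s Xl)‖ := norm_inner_le_norm _ _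
        _ ≤ δ * (‖x‖ * (‖Xl‖ + 1)) := by
            refine mul_le_mul (le_of_lt htY) ?_ (norm_nonneg _) (le_of_lt hδ0)
            refine le_trans (ampCLM_norm_le x _) ?_
            exact mul_le_mul_of_nonneg_left hu_norm (norm_nonneg _)
    have htotal : ‖(inner ℂ Yl (ampCLM x Xl) : ℂ)‖ ≤ δ * C := by
      rw [hsplit]
      calc ‖(inner ℂ Yl (ampCLM x Xl - ampCLM x (ampCLM s Xl))
            + inner ℂ (Yl - ampCLM t Yl) (ampCLM x (ampCLM s Xl))
            + (inner ℂ (ampCLM t Yl) (ampCLM x (ampCLM s Xl)) : ℂ))‖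
          ≤ ‖(inner ℂ Yl (ampCLM x Xl - ampCLM x (ampCLM s Xl)) : ℂ)
              + inner ℂ (Yl - ampCLM t Yl) (ampCLM x (ampCLM s Xl))‖
            + ‖(inner ℂ (ampCLM t Yl) (ampCLM x (ampCLM s Xl)) : ℂ)‖ := norm_add_le _ _
        _ ≤ ‖(inner ℂ Yl (ampCLM x Xl - ampCLM x (ampCLM s Xl)) : ℂ)‖
            + ‖(inner ℂ (Yl - ampCLM t Yl) (ampCLM x (ampCLM s Xl)) : ℂ)‖
            + ‖(inner ℂ (ampCLM t Yl) (ampCLM x (ampCLM s Xl)) : ℂ)‖ := by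
              have := norm_add_le (inner ℂ Yl (ampCLM x Xl - ampCLM x (ampCLM s Xl)) : ℂ)
                (inner ℂ (Yl - ampCLM t Yl) (ampCLM x (ampCLM s Xl)) : ℂ)
              linarith
        _ ≤ ‖Yl‖ * (‖x‖ * δ) + δ * (‖x‖ * (‖Xl‖ + 1)) + 0 := by
              rw [hzero]
              simp only [norm_zero]
              linarith
        _ ≤ δ * C := by rw [hC]; nlinarith [norm_nonneg Yl, norm_nonneg x, hδ0.le]
    have hδC : δ * C ≤ ε := by
      have h10 : δ ≤ ε / (C + 1) := min_le_right _ _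
      have h11 : δ * C ≤ (ε / (C + 1)) * C := mul_le_mul_of_nonneg_right h10 hC0
      refine le_trans h11 ?_
      rw [div_mul_eq_mul_div, div_le_iff₀ (by linarith : (0:ℝ) < C + 1)]
      nlinarith
    linarith
  have hval0 : ‖(inner ℂ Yl (ampCLM x Xl) : ℂ)‖ ≤ 0 := le_of_forall_pos_le_add hkey
  have : (inner ℂ Yl (ampCLM x Xl) : ℂ) = 0 := norm_le_zero_iff.1 hval0
  exact this


lemma main_half (A : Set (H₁ →L[ℂ] H₁)) (B : Set (H₂ →L[ℂ] H₂)) (M : Set (H₁ →L[ℂ] H₂))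
    (hM : IsTRO M) (hMe : IsEssential M)
    (h₁ : A = wspan (mulSet (mulSet (adjSet M) B) M))
    (h₂ : B = wspan (mulSet (mulSet M A) (adjSet M))) :
    diagSet A = wspan (mulSet (mulSet (adjSet M) (diagSet B)) M) := by
  apply Set.Subset.antisymm (hard_direction A B M hM hMe h₁ h₂)
  intro T hT
  constructor
  · rw [h₁]
    exact wspan_mono (mulSet_mono (mulSet_mono (subset_refl _) Set.inter_subset_left)
      (subset_refl _)) hT
  · refine ⟨star T, ?_, star_star T⟩
    rw [ContinuousLinearMap.star_eq_adjoint, h₁]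
    have h3 := adjoint_mem_wspan_adjSet hT
    rw [adjSet_mulSet, adjSet_mulSet, adjSet_adjSet, adjSet_diagSet] at h3
    rw [mulSet_assoc]
    exact wspan_mono (mulSet_mono (subset_refl _)
      (mulSet_mono Set.inter_subset_left (subset_refl _))) h3

end Main

end Aux

/-- **Proposition 2.5.** If `A ∼_M B` for an essential TRO `M`, then `Δ(A) ∼_M Δ(B)`. -/
theorem stmt3 {H₁ : Type*} {H₂ : Type*}
    [NormedAddCommGroup H₁] [InnerProductSpace ℂ H₁] [CompleteSpace H₁]
    [NormedAddCommGroup H₂] [InnerProductSpace ℂ H₂] [CompleteSpace H₂]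
    (A : Set (H₁ →L[ℂ] H₁)) (B : Set (H₂ →L[ℂ] H₂))
    (hA : IsWStarClosedAlgebra A) (hB : IsWStarClosedAlgebra B)
    (M : Set (H₁ →L[ℂ] H₂)) (hM : IsTRO M) (hMe : IsEssential M)
    (h₁ : A = wspan (mulSet (mulSet (adjSet M) B) M))
    (h₂ : B = wspan (mulSet (mulSet M A) (adjSet M))) :
    diagSet A = wspan (mulSet (mulSet (adjSet M) (diagSet B)) M) ∧
    diagSet B = wspan (mulSet (mulSet M (diagSet A)) (adjSet M)) := by
  constructor
  · exact main_half A B M hM hMe h₁ h₂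
  · have hM' := isTRO_adjSet hM
    have hMe' : IsEssential (adjSet M) := ⟨hMe.2, by rw [adjSet_adjSet]; exact hMe.1⟩
    have h₁' : B = wspan (mulSet (mulSet (adjSet (adjSet M)) A) (adjSet M)) := by
      rw [adjSet_adjSet]; exact h₂
    have h₂' : A = wspan (mulSet (mulSet (adjSet M) B) (adjSet (adjSet M))) := by
      rw [adjSet_adjSet]; exact h₁
    have hmain := main_half B A (adjSet M) hM' hMe' h₁' h₂'
    rwa [adjSet_adjSet] at hmain
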